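/- arXiv:1303.1655 — 5 statements merged into one kernel-verified Lean document; each statement's English description precedes it below -/
import Mathlib

section
/- Fix R > 0 and define u(x₁,x₂,t) = max(x₁², ξ(t)²) + max(x₂², ξ(t)²) − 2R² with ξ(t) = (3/2)^{1/3} t^{1/3}. Then for every t > 0 the function (x₁,x₂) ↦ u(x₁,x₂,t) is not differentiable at the point (ξ(t), 0); consequently u(·,t) is Lipschitz on bounded sets but not continuously differentiable on ℝ². -/
open Filter Topology Bornology

/-!
At `(ξ t, 0)` the two branches `x₁²` and `ξ(t)²` of `max (x₁²) (ξ(t)²)` meet with different slopes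
`2 ξ(t) ≠ 0`. A differentiable function lying above a differentiable one and touching it at a point
has the same derivative there (its difference has a local minimum), so a maximum of two functions
whose derivatives differ at a contact point cannot be differentiable. The Lipschitz bound holds
because `u(·, t)` is built from smooth functions by `max` and sums, hence is locally Lipschitz.
-/

theorem HasDerivAt.eq_of_eventually_le_of_eq {f h : ℝ → ℝ} {x f' h' : ℝ}
    (hh : HasDerivAt h h' x) (hf : HasDerivAt f f' x) (hle : ∀ᶠ y in 𝓝 x, f y ≤ h y)
    (heq : f x = h x) : h' = f' := by
  have hmin : IsLocalMin (fun y => h y - f y) x := by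
    filter_upwards [hle] with y hy
    linarith
  exact sub_eq_zero.mp (hmin.hasDerivAt_eq_zero (hh.sub hf))

theorem not_differentiableAt_max_of_hasDerivAt {f g : ℝ → ℝ} {x f' g' : ℝ}
    (hf : HasDerivAt f f' x) (hg : HasDerivAt g g' x) (hfg : f x = g x) (hne : f' ≠ g') :
    ¬ DifferentiableAt ℝ (fun y => max (f y) (g y)) x := by
  intro hmax
  have hf_touch : f x = max (f x) (g x) := by rw [hfg, max_self]
  have hg_touch : g x = max (f x) (g x) := hfg ▸ hf_touch
  have hderiv_f := hmax.hasDerivAt.eq_of_eventually_le_of_eq hf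
    (.of_forall fun _ => le_max_left _ _) hf_touch
  have hderiv_g := hmax.hasDerivAt.eq_of_eventually_le_of_eq hg
    (.of_forall fun _ => le_max_right _ _) hg_touch
  exact hne (hderiv_f.symm.trans hderiv_g)

theorem not_differentiableAt_max_sq {c : ℝ} (hc : c ≠ 0) :
    ¬ DifferentiableAt ℝ (fun y : ℝ => max (y ^ 2) (c ^ 2)) c := by
  refine not_differentiableAt_max_of_hasDerivAt (by simpa using hasDerivAt_pow 2 c)
    (hasDerivAt_const c (c ^ 2)) rfl ?_
  simpa using hc

theorem LocallyLipschitz.exists_lipschitzOnWith_of_isBounded {α β : Type*} [PseudoMetricSpace α]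
    [ProperSpace α] [PseudoMetricSpace β] {f : α → β} {s : Set α} (hf : LocallyLipschitz f)
    (hs : IsBounded s) : ∃ K, LipschitzOnWith K f s := by
  obtain ⟨K, hK⟩ :=
    hf.locallyLipschitzOn.exists_lipschitzOnWith_of_compact (s := closure s) hs.isCompact_closure
  exact ⟨K, hK.mono subset_closure⟩

theorem stmt2_general (R : ℝ)
    (ξ : ℝ → ℝ)
    (hξ : ∀ t : ℝ, ξ t = (3/2 : ℝ) ^ ((1:ℝ)/3) * t ^ ((1:ℝ)/3))
    (u : ℝ × ℝ → ℝ → ℝ)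
    (hu : ∀ (x : ℝ × ℝ) (t : ℝ),
      u x t = max (x.1^2) ((ξ t)^2) + max (x.2^2) ((ξ t)^2) - 2 * R^2) :
    ∀ t : ℝ, 0 < t →
      ¬ DifferentiableAt ℝ (fun x : ℝ × ℝ => u x t) (ξ t, 0)
      ∧ (∀ s : Set (ℝ × ℝ), Bornology.IsBounded s →
          ∃ K : NNReal, LipschitzOnWith K (fun x : ℝ × ℝ => u x t) s)
      ∧ ¬ ContDiff ℝ 1 (fun x : ℝ × ℝ => u x t) := by
  intro t ht
  have hξ_pos : 0 < ξ t := by rw [hξ]; positivity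
  have hu_t : (fun x : ℝ × ℝ => u x t) =
      fun x => max (x.1 ^ 2) (ξ t ^ 2) + max (x.2 ^ 2) (ξ t ^ 2) - 2 * R ^ 2 :=
    funext fun x => hu x t
  have hu_axis : (fun y : ℝ => u (y, 0) t) =
      fun y => max (y ^ 2) (ξ t ^ 2) + (ξ t ^ 2 - 2 * R ^ 2) := by
    funext y
    rw [hu, max_eq_right (by simpa using sq_nonneg (ξ t) : (0 : ℝ) ^ 2 ≤ ξ t ^ 2)]
    ring
  have hnot_diff : ¬ DifferentiableAt ℝ (fun x : ℝ × ℝ => u x t) (ξ t, 0) := by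
    intro hdiff
    have hembed : DifferentiableAt ℝ (fun y : ℝ => (y, (0 : ℝ))) (ξ t) :=
      differentiableAt_id.prodMk (differentiableAt_const _)
    have hline := hdiff.comp (ξ t) hembed
    rw [Function.comp_def, hu_axis, differentiableAt_add_const_iff] at hline
    exact not_differentiableAt_max_sq hξ_pos.ne' hline
  refine ⟨hnot_diff, fun s hs => ?_, fun h => hnot_diff (h.differentiable one_ne_zero _)⟩
  have hsq {g : ℝ × ℝ → ℝ} (hg : ContDiff ℝ 1 g) :
      LocallyLipschitz fun x => max (g x ^ 2) (ξ t ^ 2) :=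
    (hg.pow 2).locallyLipschitz.max_const _
  rw [hu_t]
  exact ((hsq contDiff_fst).add (hsq contDiff_snd)).sub (.const _)
    |>.exists_lipschitzOnWith_of_isBounded hs

/-- for every t > 0 the explicit solution
u(x₁,x₂,t) = max(x₁², ξ(t)²) + max(x₂², ξ(t)²) − 2R² is not differentiable at
(ξ(t), 0); consequently u(·,t) is Lipschitz on bounded sets but not C¹ on ℝ². -/
theorem stmt2 (R : ℝ) (hR : 0 < R)
    (ξ : ℝ → ℝ)
    (hξ : ∀ t : ℝ, ξ t = (3/2 : ℝ) ^ ((1:ℝ)/3) * t ^ ((1:ℝ)/3))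
    (u : ℝ × ℝ → ℝ → ℝ)
    (hu : ∀ (x : ℝ × ℝ) (t : ℝ),
      u x t = max (x.1^2) ((ξ t)^2) + max (x.2^2) ((ξ t)^2) - 2 * R^2) :
    ∀ t : ℝ, 0 < t →
      ¬ DifferentiableAt ℝ (fun x : ℝ × ℝ => u x t) (ξ t, 0)
      ∧ (∀ s : Set (ℝ × ℝ), Bornology.IsBounded s →
          ∃ K : NNReal, LipschitzOnWith K (fun x : ℝ × ℝ => u x t) s)
      ∧ ¬ ContDiff ℝ 1 (fun x : ℝ × ℝ => u x t) :=
  stmt2_general R ξ hξ u hu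
end

section
/- Fix R > 0. Let ξ(t) = (3/2)^{1/3} t^{1/3}, u(x₁,x₂,t) = max(x₁², ξ(t)²) + max(x₂², ξ(t)²) − 2R², and σ(x,t) = (clamp(x₁/ξ(t)), clamp(x₂/ξ(t))) where clamp(s) = max(−1, min(1, s)). Then for every t > 0 and every x = (x₁,x₂) ∈ ℝ² with |x₁| ≠ ξ(t) and |x₂| ≠ ξ(t): the function s ↦ u(x,s) is differentiable at s = t, the partial derivatives ∂σ₁/∂x₁ and ∂σ₂/∂x₂ of σ(·,t) exist at x, and ∂u/∂t(x,t) = ∂σ₁/∂x₁(x,t) + ∂σ₂/∂x₂(x,t). Explicitly, both sides equal 2/ξ(t) when |x₁|,|x₂| < ξ(t), equal 1/ξ(t) when exactly one of |x₁|,|x₂| is < ξ(t), and equal 0 when |x₁|,|x₂| > ξ(t). Thus u solves the anisotropic total variation flow u_t = div σ pointwise on ℝ² × (0,∞) outside the one-dimensional exceptional set {|x₁| = ξ(t)} ∪ {|x₂| = ξ(t)}. -/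
/-!
Off the lines `|xᵢ| = ξ(t)`, each term `max (xᵢ², ξ²)` of `u` is locally either the constant
`xᵢ²` or `ξ²`, and each component of `σ` is locally either `±1` or `xᵢ / ξ`. Both sides of the
equation therefore split coordinatewise into the same contribution, `1/ξ(t)` or `0`; the time
derivative matches because `ξ³ = 3t/2` gives `(ξ²)' = 1/ξ`.
-/

section MaxMin

variable {f : ℝ → ℝ} {f' c t : ℝ}

theorem HasDerivAt.const_max_of_lt (hf : HasDerivAt f f' t) (h : c < f t) :
    HasDerivAt (fun s => max c (f s)) f' t :=
  hf.congr_of_eventuallyEq <| (hf.continuousAt.eventually_const_lt h).mono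
    fun _ hs => max_eq_right hs.le

theorem ContinuousAt.hasDerivAt_const_max_of_gt (hf : ContinuousAt f t) (h : f t < c) :
    HasDerivAt (fun s => max c (f s)) 0 t :=
  (hasDerivAt_const t c).congr_of_eventuallyEq <| (hf.eventually_lt_const h).mono
    fun _ hs => max_eq_left hs.le

theorem HasDerivAt.const_min_of_gt (hf : HasDerivAt f f' t) (h : f t < c) :
    HasDerivAt (fun s => min c (f s)) f' t :=
  hf.congr_of_eventuallyEq <| (hf.continuousAt.eventually_lt_const h).mono
    fun _ hs => min_eq_right hs.le

theorem ContinuousAt.hasDerivAt_const_min_of_lt (hf : ContinuousAt f t) (h : c < f t) :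
    HasDerivAt (fun s => min c (f s)) 0 t :=
  (hasDerivAt_const t c).congr_of_eventuallyEq <| (hf.eventually_const_lt h).mono
    fun _ hs => min_eq_left hs.le

end MaxMin

theorem hasDerivAt_clamp {s : ℝ} (hs : |s| ≠ 1) :
    HasDerivAt (fun y => max (-1) (min 1 y)) (if |s| < 1 then 1 else 0) s := by
  rcases hs.lt_or_gt with hlt | hgt
  · obtain ⟨hneg, hone⟩ := abs_lt.mp hlt
    rw [if_pos hlt]
    exact ((hasDerivAt_id s).const_min_of_gt hone).const_max_of_lt (by simpa [min_eq_right hone.le] using hneg)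
  · rw [if_neg hgt.not_gt]
    rcases lt_max_iff.mp (abs_eq_max_neg (a := s) ▸ hgt) with hone | hneg
    · exact (continuousAt_id.hasDerivAt_const_min_of_lt hone).const_max_of_lt
        (by simp [min_eq_left hone.le])
    · exact ContinuousAt.hasDerivAt_const_max_of_gt (by fun_prop)
        ((min_le_right 1 s).trans_lt (by linarith))

theorem hasDerivAt_clamp_div {r a : ℝ} (hr : 0 < r) (ha : |a| ≠ r) :
    HasDerivAt (fun y => max (-1) (min 1 (y / r))) (if |a| < r then r⁻¹ else 0) a := by
  have habs : |a / r| < 1 ↔ |a| < r := by rw [abs_div, abs_of_pos hr, div_lt_one hr]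
  have hne : |a / r| ≠ 1 := by rw [abs_div, abs_of_pos hr, Ne, div_eq_one_iff_eq hr.ne']; exact ha
  refine ((hasDerivAt_clamp hne).comp a ((hasDerivAt_id a).div_const r)).congr_deriv ?_
  split_ifs <;> simp_all

theorem hasDerivAt_sq_max_sq {g : ℝ → ℝ} {g' t a : ℝ} (hg : HasDerivAt (fun s => g s ^ 2) g' t)
    (hpos : 0 ≤ g t) (ha : |a| ≠ g t) :
    HasDerivAt (fun s => max (a ^ 2) (g s ^ 2)) (if |a| < g t then g' else 0) t := by
  rcases ha.lt_or_gt with hlt | hgt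
  · rw [if_pos hlt]
    exact hg.const_max_of_lt (by rwa [sq_lt_sq, abs_of_nonneg hpos])
  · rw [if_neg hgt.not_gt]
    exact hg.continuousAt.hasDerivAt_const_max_of_gt (by rwa [sq_lt_sq, abs_of_nonneg hpos])

noncomputable def xi (s : ℝ) : ℝ := (3 / 2 : ℝ) ^ ((1 : ℝ) / 3) * s ^ ((1 : ℝ) / 3)

theorem xi_pos {t : ℝ} (ht : 0 < t) : 0 < xi t :=
  mul_pos (Real.rpow_pos_of_pos (by norm_num) _) (Real.rpow_pos_of_pos ht _)

theorem xi_pow_three {t : ℝ} (ht : 0 ≤ t) : xi t ^ 3 = 3 / 2 * t := by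
  have hcube {x : ℝ} (hx : 0 ≤ x) : (x ^ ((1 : ℝ) / 3)) ^ 3 = x := by
    simpa using Real.rpow_inv_natCast_pow (n := 3) hx (by norm_num)
  rw [xi, mul_pow, hcube (by norm_num), hcube ht]

theorem hasDerivAt_xi_sq {t : ℝ} (ht : 0 < t) : HasDerivAt (fun s => xi s ^ 2) (xi t)⁻¹ t := by
  have hxi : HasDerivAt xi (xi t / (3 * t)) t :=
    ((Real.hasDerivAt_rpow_const (Or.inl ht.ne')).const_mul _).congr_deriv
      (by rw [Real.rpow_sub_one ht.ne', xi]; ring)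
  refine (hxi.pow 2).congr_deriv ?_
  have := (xi_pos ht).ne'
  field_simp
  linear_combination 2 * xi_pow_three ht.le

theorem stmt6_general (R : ℝ)
    (ξ : ℝ → ℝ)
    (hξ : ∀ s : ℝ, ξ s = (3/2 : ℝ) ^ ((1:ℝ)/3) * s ^ ((1:ℝ)/3))
    (clamp : ℝ → ℝ)
    (hclamp : ∀ s : ℝ, clamp s = max (-1) (min 1 s))
    (u : ℝ × ℝ → ℝ → ℝ)
    (hu : ∀ (x : ℝ × ℝ) (s : ℝ),
      u x s = max (x.1^2) ((ξ s)^2) + max (x.2^2) ((ξ s)^2) - 2 * R^2)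
    (σ : ℝ × ℝ → ℝ → ℝ × ℝ)
    (hσ : ∀ (x : ℝ × ℝ) (s : ℝ), σ x s = (clamp (x.1 / ξ s), clamp (x.2 / ξ s))) :
    ∀ t : ℝ, 0 < t → ∀ x : ℝ × ℝ, |x.1| ≠ ξ t → |x.2| ≠ ξ t →
      ∃ du d₁ d₂ : ℝ,
        HasDerivAt (fun s : ℝ => u x s) du t
        ∧ HasDerivAt (fun y : ℝ => (σ (y, x.2) t).1) d₁ x.1
        ∧ HasDerivAt (fun y : ℝ => (σ (x.1, y) t).2) d₂ x.2
        ∧ du = d₁ + d₂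
        ∧ (|x.1| < ξ t → |x.2| < ξ t → du = 2 / ξ t)
        ∧ ((|x.1| < ξ t ∧ ξ t < |x.2|) ∨ (ξ t < |x.1| ∧ |x.2| < ξ t) → du = 1 / ξ t)
        ∧ (ξ t < |x.1| → ξ t < |x.2| → du = 0) := by
  obtain rfl : ξ = xi := funext hξ
  obtain rfl : clamp = fun s => max (-1) (min 1 s) := funext hclamp
  obtain rfl : u = _ := funext₂ hu
  obtain rfl : σ = _ := funext₂ hσ
  intro t ht x h₁ h₂
  have hpos := xi_pos ht
  have hu₁ := hasDerivAt_sq_max_sq (hasDerivAt_xi_sq ht) hpos.le h₁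
  have hu₂ := hasDerivAt_sq_max_sq (hasDerivAt_xi_sq ht) hpos.le h₂
  refine ⟨_, _, _, (hu₁.add hu₂).sub_const (2 * R ^ 2), hasDerivAt_clamp_div hpos h₁,
    hasDerivAt_clamp_div hpos h₂, rfl, fun ha hb => ?_, ?_, fun ha hb => ?_⟩
  · rw [if_pos ha, if_pos hb]; ring
  · rintro (⟨ha, hb⟩ | ⟨ha, hb⟩)
    · rw [if_pos ha, if_neg hb.not_gt]; ring
    · rw [if_neg ha.not_gt, if_pos hb]; ring
  · rw [if_neg ha.not_gt, if_neg hb.not_gt]; ring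

/-- u(x,t) = max(x₁², ξ(t)²) + max(x₂², ξ(t)²) − 2R² solves
u_t = ∂σ₁/∂x₁ + ∂σ₂/∂x₂ pointwise on ℝ² × (0,∞) outside the exceptional set
{|x₁| = ξ(t)} ∪ {|x₂| = ξ(t)}, where σ(x,t) = (clamp(x₁/ξ(t)), clamp(x₂/ξ(t))).
Both sides equal 2/ξ(t), 1/ξ(t) or 0 according to how many of |x₁|, |x₂| are
below ξ(t). -/
theorem stmt6 (R : ℝ) (hR : 0 < R)
    (ξ : ℝ → ℝ)
    (hξ : ∀ s : ℝ, ξ s = (3/2 : ℝ) ^ ((1:ℝ)/3) * s ^ ((1:ℝ)/3))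
    (clamp : ℝ → ℝ)
    (hclamp : ∀ s : ℝ, clamp s = max (-1) (min 1 s))
    (u : ℝ × ℝ → ℝ → ℝ)
    (hu : ∀ (x : ℝ × ℝ) (s : ℝ),
      u x s = max (x.1^2) ((ξ s)^2) + max (x.2^2) ((ξ s)^2) - 2 * R^2)
    (σ : ℝ × ℝ → ℝ → ℝ × ℝ)
    (hσ : ∀ (x : ℝ × ℝ) (s : ℝ), σ x s = (clamp (x.1 / ξ s), clamp (x.2 / ξ s))) :
    ∀ t : ℝ, 0 < t → ∀ x : ℝ × ℝ, |x.1| ≠ ξ t → |x.2| ≠ ξ t →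
      ∃ du d₁ d₂ : ℝ,
        HasDerivAt (fun s : ℝ => u x s) du t
        ∧ HasDerivAt (fun y : ℝ => (σ (y, x.2) t).1) d₁ x.1
        ∧ HasDerivAt (fun y : ℝ => (σ (x.1, y) t).2) d₂ x.2
        ∧ du = d₁ + d₂
        ∧ (|x.1| < ξ t → |x.2| < ξ t → du = 2 / ξ t)
        ∧ ((|x.1| < ξ t ∧ ξ t < |x.2|) ∨ (ξ t < |x.1| ∧ |x.2| < ξ t) → du = 1 / ξ t)
        ∧ (ξ t < |x.1| → ξ t < |x.2| → du = 0) :=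
  stmt6_general R ξ hξ clamp hclamp u hu σ hσ
end

section
/- Let 0 < α < L and M > 0. Define u : (−L,L)² × [0,∞) → ℝ by u(x,t) = 2t/α − M if max(|x₁|,|x₂|) ≤ α and u(x,t) = −2αt/(L²−α²) otherwise, and define σ : (−L,L)² → ℝ² by σ₁(x) = Z₁(x₁) if |x₂| ≤ α and σ₁(x) = Z₂(x₁) if |x₂| > α, σ₂(x) = Z₁(x₂) if |x₁| ≤ α and σ₂(x) = Z₂(x₂) if |x₁| > α, where Z₁(x) = x/α and Z₂(x) = −x/(L+α) for |x| ≤ α, Z₁(x) = (L−|x|)/(L−α)·sgn(x) and Z₂(x) = −α(|x|−L)/(L²−α²)·sgn(x) for α ≤ |x| ≤ L. Then for every t ≥ 0: (i) for every x in the open square (−α,α)², ∂u/∂t(x,t) = 2/α and ∂σ₁/∂x₁(x) + ∂σ₂/∂x₂(x) = 2/α, so u_t = div σ there; (ii) for every x with α < |x₁| < L and α < |x₂| < L, ∂u/∂t(x,t) = −2α/(L²−α²) and ∂σ₁/∂x₁(x) + ∂σ₂/∂x₂(x) = −2α/(L²−α²), so u_t = div σ there as well. -/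
private lemma lin_deriv (c b x : ℝ) : HasDerivAt (fun y : ℝ => c * y + b) c x := by
  simpa using ((hasDerivAt_id x).const_mul c).add_const b

private lemma deriv_of_local {f : ℝ → ℝ} {c b x : ℝ} {s : Set ℝ} (hs : IsOpen s)
    (hx : x ∈ s) (h : ∀ y ∈ s, f y = c * y + b) : HasDerivAt f c x :=
  (lin_deriv c b x).congr_of_eventuallyEq
    (by filter_upwards [hs.mem_nhds hx] with y hy using h y hy)

/-- the two-facet solution u on (−L,L)² with Cahn–Hoffman field σ
built from Z₁, Z₂ satisfies u_t = div σ pointwise on the open inner square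
(−α,α)² (both sides equal 2/α) and on the open outer corner regions
{α < |x₁| < L, α < |x₂| < L} (both sides equal −2α/(L²−α²)). -/
theorem stmt8 (α L M : ℝ) (hα : 0 < α) (hαL : α < L) (hM : 0 < M)
    (Z₁ Z₂ : ℝ → ℝ)
    (hZ₁ : ∀ x : ℝ, Z₁ x =
      if |x| ≤ α then x / α else (L - |x|) / (L - α) * Real.sign x)
    (hZ₂ : ∀ x : ℝ, Z₂ x =
      if |x| ≤ α then -x / (L + α) else -α * (|x| - L) / (L^2 - α^2) * Real.sign x)
    (σ : ℝ × ℝ → ℝ × ℝ)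
    (hσ : ∀ x : ℝ × ℝ, σ x =
      ((if |x.2| ≤ α then Z₁ x.1 else Z₂ x.1),
       (if |x.1| ≤ α then Z₁ x.2 else Z₂ x.2)))
    (u : ℝ × ℝ → ℝ → ℝ)
    (hu : ∀ (x : ℝ × ℝ) (t : ℝ), u x t =
      if max |x.1| |x.2| ≤ α then 2 * t / α - M else -2 * α * t / (L^2 - α^2)) :
    ∀ t : ℝ, 0 ≤ t → ∀ x : ℝ × ℝ,
      -- (i) inner square (−α,α)²
      ((|x.1| < α ∧ |x.2| < α) →
        HasDerivAt (fun s : ℝ => u x s) (2 / α) t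
        ∧ ∃ d₁ d₂ : ℝ,
            HasDerivAt (fun y : ℝ => (σ (y, x.2)).1) d₁ x.1
            ∧ HasDerivAt (fun y : ℝ => (σ (x.1, y)).2) d₂ x.2
            ∧ d₁ + d₂ = 2 / α)
      -- (ii) outer corner regions α < |xᵢ| < L
      ∧ ((α < |x.1| ∧ |x.1| < L ∧ α < |x.2| ∧ |x.2| < L) →
        HasDerivAt (fun s : ℝ => u x s) (-2 * α / (L^2 - α^2)) t
        ∧ ∃ d₁ d₂ : ℝ,
            HasDerivAt (fun y : ℝ => (σ (y, x.2)).1) d₁ x.1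
            ∧ HasDerivAt (fun y : ℝ => (σ (x.1, y)).2) d₂ x.2
            ∧ d₁ + d₂ = -2 * α / (L^2 - α^2)) := by
  intro t ht x
  -- local behaviour of Z₁ on the inner interval
  have hZ₁inner : ∀ y ∈ Set.Ioo (-α) α, Z₁ y = (1 / α) * y + 0 := by
    intro y hy
    have : |y| ≤ α := le_of_lt (abs_lt.mpr ⟨hy.1, hy.2⟩)
    rw [hZ₁ y, if_pos this]; ring
  -- local behaviour of Z₂ on outer intervals
  have hZ₂pos : ∀ y ∈ Set.Ioo α L,
      Z₂ y = (-α / (L ^ 2 - α ^ 2)) * y + α * L / (L ^ 2 - α ^ 2) := by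
    intro y hy
    have hy0 : 0 < y := lt_trans hα hy.1
    have : ¬ |y| ≤ α := by
      rw [abs_of_pos hy0]; exact not_le.mpr hy.1
    rw [hZ₂ y, if_neg this, Real.sign_of_pos hy0, abs_of_pos hy0]; ring
  have hZ₂neg : ∀ y ∈ Set.Ioo (-L) (-α),
      Z₂ y = (-α / (L ^ 2 - α ^ 2)) * y + (-(α * L) / (L ^ 2 - α ^ 2)) := by
    intro y hy
    have hy0 : y < 0 := lt_trans hy.2 (by linarith)
    have : ¬ |y| ≤ α := by
      rw [abs_of_neg hy0]; push_neg; linarith [hy.2]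
    rw [hZ₂ y, if_neg this, Real.sign_of_neg hy0, abs_of_neg hy0]; ring
  constructor
  · rintro ⟨h1, h2⟩
    have h2le : |x.2| ≤ α := le_of_lt h2
    have h1le : |x.1| ≤ α := le_of_lt h1
    constructor
    · have : (fun s : ℝ => u x s) = fun s : ℝ => (2 / α) * s + (-M) := by
        funext s
        rw [hu x s, if_pos (max_le h1le h2le)]; ring
      rw [this]; exact lin_deriv _ _ t
    · refine ⟨1 / α, 1 / α, ?_, ?_, by ring⟩
      · refine deriv_of_local (b := 0) isOpen_Ioo (abs_lt.mp h1 : x.1 ∈ Set.Ioo (-α) α) ?_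
        intro y hy
        rw [hσ (y, x.2)]
        simp only
        rw [if_pos h2le]
        exact hZ₁inner y hy
      · refine deriv_of_local (b := 0) isOpen_Ioo (abs_lt.mp h2 : x.2 ∈ Set.Ioo (-α) α) ?_
        intro y hy
        rw [hσ (x.1, y)]
        simp only
        rw [if_pos h1le]
        exact hZ₁inner y hy
  · rintro ⟨h1, h1L, h2, h2L⟩
    have h2gt : ¬ |x.2| ≤ α := not_le.mpr h2
    have h1gt : ¬ |x.1| ≤ α := not_le.mpr h1
    have hx1ne : x.1 ≠ 0 := by intro h; rw [h] at h1; simp at h1; linarith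
    have hx2ne : x.2 ≠ 0 := by intro h; rw [h] at h2; simp at h2; linarith
    constructor
    · have : (fun s : ℝ => u x s)
          = fun s : ℝ => (-2 * α / (L ^ 2 - α ^ 2)) * s + 0 := by
        funext s
        rw [hu x s, if_neg (by rw [not_le]; exact lt_of_lt_of_le h1 (le_max_left _ _))]
        ring
      rw [this]
      simpa using lin_deriv (-2 * α / (L ^ 2 - α ^ 2)) 0 t
    · have key : ∀ z : ℝ, α < |z| → |z| < L →
          HasDerivAt Z₂ (-α / (L ^ 2 - α ^ 2)) z := by
        intro z hz hzL
        rcases lt_or_gt_of_ne (fun h : z = 0 => by rw [h] at hz; simp at hz; linarith)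
          with hneg | hpos
        · refine deriv_of_local (b := -(α * L) / (L ^ 2 - α ^ 2)) isOpen_Ioo (show z ∈ Set.Ioo (-L) (-α) from ?_) hZ₂neg
          rw [abs_of_neg hneg] at hz hzL
          exact ⟨by linarith, by linarith⟩
        · refine deriv_of_local (b := α * L / (L ^ 2 - α ^ 2)) isOpen_Ioo (show z ∈ Set.Ioo α L from ?_) hZ₂pos
          rw [abs_of_pos hpos] at hz hzL
          exact ⟨hz, hzL⟩
      refine ⟨-α / (L ^ 2 - α ^ 2), -α / (L ^ 2 - α ^ 2), ?_, ?_, by ring⟩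
      · refine ((key x.1 h1 h1L).congr_of_eventuallyEq ?_)
        filter_upwards with y
        rw [hσ (y, x.2)]
        simp only
        rw [if_neg h2gt]
      · refine ((key x.2 h2 h2L).congr_of_eventuallyEq ?_)
        filter_upwards with y
        rw [hσ (x.1, y)]
        simp only
        rw [if_neg h1gt]
end

section
/- Fix α > 0 and let γ = 1/2. Define u^α : ℝ² × ℝ → ℝ by u^α(x,t) = 2t/α + (x₁²/α)·χ_{{|x₁| > α}} + (x₂²/α)·χ_{{|x₂| > α}}, and σ : ℝ² → ℝ² by σᵢ(x) = clamp(xᵢ/α), i = 1,2, where clamp(s) = max(−1, min(1, s)). Then: (i) u^α(x,t) = u^α(x,0) + (2/α)·t for all x and t, so u^α is a traveling (vertically translating) front with speed 2/α; (ii) for i = 1,2 and |xᵢ| > α the partial derivative ∂u^α/∂xᵢ exists, equals 2xᵢ/α ≠ 0, and σᵢ(x) = sgn(∂u^α/∂xᵢ); (iii) for every t ∈ ℝ and every x with |x₁| ≠ α and |x₂| ≠ α, u^α(·,t) is twice differentiable at x, σ is differentiable at x, and ∂u^α/∂t(x,t) = γ·(∂²u^α/∂x₁² + ∂²u^α/∂x₂²)(x,t)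 + ∂σ₁/∂x₁(x) + ∂σ₂/∂x₂(x), i.e. u^α solves the regularized anisotropic total variation flow u_t = γΔu + div(sgn u_{x₁}, sgn u_{x₂}) pointwise outside the lines |x₁| = α, |x₂| = α. -/
/-! In each coordinate the front is piecewise smooth away from `|xᵢ| = α`. Outside the strip
`|xᵢ| ≤ α` it is `xᵢ²/α`, so `∂²u/∂xᵢ² = 2/α`, while `σᵢ = ±1` is locally constant; inside the strip
it is constant in `xᵢ`, while `σᵢ = xᵢ/α` has `∂σᵢ/∂xᵢ = 1/α`. With `γ = 1/2` every coordinate thus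
contributes exactly `1/α` to `γΔu + div σ`, and the two together match `u_t = 2/α`. -/

open Filter Topology

noncomputable def frontProfile (α y : ℝ) : ℝ := if α < |y| then y ^ 2 / α else 0

noncomputable def frontProfileDeriv (α y : ℝ) : ℝ := if α < |y| then 2 * y / α else 0

def clampUnit (s : ℝ) : ℝ := max (-1) (min 1 s)

theorem Real.sign_mul_of_pos_left {c : ℝ} (hc : 0 < c) (r : ℝ) :
    Real.sign (c * r) = Real.sign r := by
  rcases lt_trichotomy r 0 with hr | rfl | hr
  · rw [Real.sign_of_neg hr, Real.sign_of_neg (mul_neg_of_pos_of_neg hc hr)]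
  · rw [mul_zero]
  · rw [Real.sign_of_pos hr, Real.sign_of_pos (mul_pos hc hr)]

theorem one_lt_abs_div_iff {α a : ℝ} (hα : 0 < α) : 1 < |a / α| ↔ α < |a| := by
  rw [abs_div, abs_of_pos hα, one_lt_div hα]

theorem hasDerivAt_ite_lt_of_ne {f g φ : ℝ → ℝ} {f' g' a c : ℝ} (hφ : ContinuousAt φ a)
    (ha : φ a ≠ c) (hf : HasDerivAt f f' a) (hg : HasDerivAt g g' a) :
    HasDerivAt (fun y => if c < φ y then f y else g y) (if c < φ a then f' else g') a := by
  rcases ha.lt_or_gt with h | h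
  · rw [if_neg h.not_gt]
    refine hg.congr_of_eventuallyEq ?_
    filter_upwards [hφ.eventually_lt continuousAt_const h] with y hy
    rw [if_neg hy.not_gt]
  · rw [if_pos h]
    refine hf.congr_of_eventuallyEq ?_
    filter_upwards [continuousAt_const.eventually_lt hφ h] with y hy
    rw [if_pos hy]

section FrontProfile

variable {α a : ℝ}

theorem hasDerivAt_frontProfile (ha : |a| ≠ α) :
    HasDerivAt (frontProfile α) (frontProfileDeriv α a) a :=
  hasDerivAt_ite_lt_of_ne continuous_abs.continuousAt ha
    (by simpa using (hasDerivAt_pow 2 a).div_const α) (hasDerivAt_const a 0)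

theorem eventually_hasDerivAt_frontProfile (ha : |a| ≠ α) :
    ∀ᶠ y in 𝓝 a, HasDerivAt (frontProfile α) (frontProfileDeriv α y) y :=
  (continuous_abs.continuousAt.eventually_ne ha).mono fun _ hy => hasDerivAt_frontProfile hy

theorem hasDerivAt_frontProfileDeriv (ha : |a| ≠ α) :
    HasDerivAt (frontProfileDeriv α) (if α < |a| then 2 / α else 0) a :=
  hasDerivAt_ite_lt_of_ne continuous_abs.continuousAt ha
    (by simpa using ((hasDerivAt_id a).const_mul 2).div_const α) (hasDerivAt_const a 0)

theorem clampUnit_eq_sign {s : ℝ} (hs : 1 < |s|) : clampUnit s = Real.sign s := by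
  rcases lt_abs.mp hs with h | h
  · rw [Real.sign_of_pos (by linarith), clampUnit, min_eq_left h.le, max_eq_right (by norm_num)]
  · rw [Real.sign_of_neg (by linarith), clampUnit, min_eq_right (by linarith),
      max_eq_left (by linarith)]

theorem hasDerivAt_clampUnit {s : ℝ} (hs : |s| ≠ 1) :
    HasDerivAt clampUnit (if 1 < |s| then 0 else 1) s := by
  rcases hs.lt_or_gt with h | h
  · rw [if_neg h.not_gt]
    refine (hasDerivAt_id s).congr_of_eventuallyEq ?_
    filter_upwards [continuous_abs.continuousAt.eventually_lt continuousAt_const h] with y hy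
    rw [abs_lt] at hy
    rw [clampUnit, min_eq_right hy.2.le, max_eq_right hy.1.le, id]
  · rw [if_pos h]
    rcases lt_abs.mp h with h | h
    · refine (hasDerivAt_const s 1).congr_of_eventuallyEq ?_
      filter_upwards [lt_mem_nhds h] with y hy
      rw [clampUnit, min_eq_left hy.le, max_eq_right (by norm_num)]
    · refine (hasDerivAt_const s (-1)).congr_of_eventuallyEq ?_
      filter_upwards [gt_mem_nhds (lt_neg.mp h)] with y hy
      rw [clampUnit, min_eq_right (by linarith), max_eq_left hy.le]

theorem hasDerivAt_clampUnit_div (hα : 0 < α) (ha : |a| ≠ α) :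
    HasDerivAt (fun y => clampUnit (y / α)) (if α < |a| then 0 else 1 / α) a := by
  have hs : |a / α| ≠ 1 := by
    rw [abs_div, abs_of_pos hα, Ne, div_eq_one_iff_eq hα.ne']
    exact ha
  refine ((hasDerivAt_clampUnit hs).comp a ((hasDerivAt_id a).div_const α)).congr_deriv ?_
  simp only [one_lt_abs_div_iff hα]
  split_ifs <;> simp

theorem frontProfile_outside_strip (hα : 0 < α) (ha : α < |a|) :
    HasDerivAt (frontProfile α) (2 * a / α) a ∧ 2 * a / α ≠ 0
      ∧ clampUnit (a / α) = Real.sign (2 * a / α) := by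
  have ha₀ : a ≠ 0 := abs_pos.mp (hα.trans ha)
  refine ⟨?_, div_ne_zero (mul_ne_zero two_ne_zero ha₀) hα.ne', ?_⟩
  · convert hasDerivAt_frontProfile ha.ne' using 1
    rw [frontProfileDeriv, if_pos ha]
  · rw [mul_div_assoc, Real.sign_mul_of_pos_left two_pos,
      clampUnit_eq_sign ((one_lt_abs_div_iff hα).mpr ha)]

end FrontProfile

/-- the traveling front u^α(x,t) = 2t/α + (x₁²/α)χ_{|x₁|>α} +
(x₂²/α)χ_{|x₂|>α} for the regularized flow u_t = γΔu + div(sgn u_{x₁}, sgn u_{x₂})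
with γ = 1/2 and Cahn–Hoffman field σᵢ(x) = clamp(xᵢ/α): (i) it translates
vertically with speed 2/α; (ii) for |xᵢ| > α, ∂u/∂xᵢ = 2xᵢ/α ≠ 0 and
σᵢ = sgn(∂u/∂xᵢ); (iii) off the lines |x₁| = α, |x₂| = α it is twice
differentiable, σ is differentiable, and u_t = γ(u_{x₁x₁} + u_{x₂x₂}) + div σ. -/
theorem stmt10 (α : ℝ) (hα : 0 < α) (γ : ℝ) (hγ : γ = 1/2)
    (clamp : ℝ → ℝ)
    (hclamp : ∀ s : ℝ, clamp s = max (-1) (min 1 s))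
    (u : ℝ × ℝ → ℝ → ℝ)
    (hu : ∀ (x : ℝ × ℝ) (t : ℝ), u x t =
      2 * t / α + (if α < |x.1| then x.1^2 / α else 0)
        + (if α < |x.2| then x.2^2 / α else 0))
    (σ : ℝ × ℝ → ℝ × ℝ)
    (hσ : ∀ x : ℝ × ℝ, σ x = (clamp (x.1 / α), clamp (x.2 / α))) :
    -- (i) traveling (vertically translating) front with speed 2/α
    (∀ (x : ℝ × ℝ) (t : ℝ), u x t = u x 0 + (2 / α) * t)
    -- (ii) outside the strips, σᵢ = sgn of the nonzero partial derivative
    ∧ (∀ (x : ℝ × ℝ) (t : ℝ),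
        (α < |x.1| →
          HasDerivAt (fun y : ℝ => u (y, x.2) t) (2 * x.1 / α) x.1
          ∧ 2 * x.1 / α ≠ 0 ∧ (σ x).1 = Real.sign (2 * x.1 / α))
        ∧ (α < |x.2| →
          HasDerivAt (fun y : ℝ => u (x.1, y) t) (2 * x.2 / α) x.2
          ∧ 2 * x.2 / α ≠ 0 ∧ (σ x).2 = Real.sign (2 * x.2 / α)))
    -- (iii) the PDE u_t = γΔu + div σ off the lines |x₁| = α, |x₂| = α
    ∧ (∀ (t : ℝ) (x : ℝ × ℝ), |x.1| ≠ α → |x.2| ≠ α →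
        ∃ (p₁ p₂ : ℝ → ℝ) (q₁ q₂ d₁ d₂ : ℝ),
          (∀ᶠ y in nhds x.1, HasDerivAt (fun z : ℝ => u (z, x.2) t) (p₁ y) y)
          ∧ (∀ᶠ y in nhds x.2, HasDerivAt (fun z : ℝ => u (x.1, z) t) (p₂ y) y)
          ∧ HasDerivAt p₁ q₁ x.1
          ∧ HasDerivAt p₂ q₂ x.2
          ∧ HasDerivAt (fun y : ℝ => (σ (y, x.2)).1) d₁ x.1
          ∧ HasDerivAt (fun y : ℝ => (σ (x.1, y)).2) d₂ x.2
          ∧ HasDerivAt (fun s : ℝ => u x s) (γ * (q₁ + q₂) + d₁ + d₂) t) := by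
  subst hγ
  obtain rfl : clamp = clampUnit := funext hclamp
  obtain rfl : σ = fun x => (clampUnit (x.1 / α), clampUnit (x.2 / α)) := funext hσ
  obtain rfl : u = fun x t => 2 * t / α + frontProfile α x.1 + frontProfile α x.2 := funext₂ hu
  dsimp only
  refine ⟨fun x t => by ring, fun x t => ⟨fun h₁ => ?_, fun h₂ => ?_⟩, fun t x h₁ h₂ => ?_⟩
  · obtain ⟨hd, hne, hsign⟩ := frontProfile_outside_strip hα h₁
    exact ⟨(hd.const_add _).add_const _, hne, hsign⟩
  · obtain ⟨hd, hne, hsign⟩ := frontProfile_outside_strip hα h₂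
    exact ⟨hd.const_add _, hne, hsign⟩
  have hcoord (a : ℝ) :
      1 / 2 * (if α < |a| then 2 / α else 0) + (if α < |a| then 0 else 1 / α) = 1 / α := by
    split_ifs <;> ring
  refine ⟨frontProfileDeriv α, frontProfileDeriv α, _, _, _, _,
    (eventually_hasDerivAt_frontProfile h₁).mono fun y hy => (hy.const_add _).add_const _,
    (eventually_hasDerivAt_frontProfile h₂).mono fun y hy => hy.const_add _,
    hasDerivAt_frontProfileDeriv h₁, hasDerivAt_frontProfileDeriv h₂,
    hasDerivAt_clampUnit_div hα h₁, hasDerivAt_clampUnit_div hα h₂, ?_⟩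
  refine ((((hasDerivAt_id t).const_mul 2).div_const α).add_const _).add_const _ |>.congr_deriv ?_
  linear_combination -hcoord x.1 - hcoord x.2
end

section
/- Fix R > 0, let ξ(t) = (3/2)^{1/3} t^{1/3}, L(t) = √(R² − ξ(t)²), and t₁ = (√2/6)·R³. For 0 < t < t₁ and |x₁| < ξ(t), define u(x,t) = 2ξ(t)² − 2R² if |x₂| ≤ ξ(t); u(x,t) = ξ(t)² + x₂² − 2R² if ξ(t) < |x₂| ≤ L(t); u(x,t) = 0 if |x₂| > L(t). Define σ(x,t) = (σ₁, σ₂) by σ₁(x,t) = x₁/ξ(t) if |x₂| ≤ L(t), σ₁(x,t) = 0 if |x₂| > L(t); and σ₂(x,t) = x₂/ξ(t) if |x₂| ≤ ξ(t), σ₂(x,t) = sgn(x₂) if |x₂| > ξ(t). Then for every t ∈ (0,t₁) and every x with |x₁| < ξ(t), |x₂| ≠ ξ(t) and |x₂| ≠ L(t): the map s ↦ u(x,s) is differentiable at t, the partial derivatives ∂σ₁/∂x₁ and ∂σ₂/∂x₂ exist at x, and ∂u/∂t(x,t) = ∂σ₁/∂x₁(x,t) + ∂σ₂/∂x₂(x,t);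 explicitly both sides equal 2/ξ(t) for |x₂| < ξ(t), equal 1/ξ(t) for ξ(t) < |x₂| < L(t), and equal 0 for |x₂| > L(t). -/
/-!
Away from the two free boundaries |x₂| = ξ(t) and |x₂| = L(t), each of u(·, s), σ₁ and σ₂
coincides near the point with a single smooth piece, so every derivative is that of the piece.
The only computation is (ξ²)' = 1/ξ, from ξ³ = 3t/2. The hypothesis t < t₁ enters through
2ξ(t)² < R², i.e. ξ(t) < L(t), which keeps the three regions in the right order.
-/

open Filter Topology

noncomputable section

/-- The paper's ξ(t), the half-width of the facet. -/
def facetRadius (t : ℝ) : ℝ := (3/2 : ℝ) ^ ((1:ℝ)/3) * t ^ ((1:ℝ)/3)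

def explicitSolution (R : ℝ) (ξ L : ℝ → ℝ) (x : ℝ × ℝ) (t : ℝ) : ℝ :=
  if |x.2| ≤ ξ t then 2 * (ξ t)^2 - 2 * R^2
  else if |x.2| ≤ L t then (ξ t)^2 + x.2^2 - 2 * R^2
  else 0

def cahnHoffmanFst (ξ L : ℝ → ℝ) (x : ℝ × ℝ) (t : ℝ) : ℝ :=
  if |x.2| ≤ L t then x.1 / ξ t else 0

def cahnHoffmanSnd (ξ : ℝ → ℝ) (x : ℝ × ℝ) (t : ℝ) : ℝ :=
  if |x.2| ≤ ξ t then x.2 / ξ t else Real.sign x.2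

end

theorem Real.hasDerivAt_sign {r : ℝ} (hr : r ≠ 0) : HasDerivAt Real.sign 0 r := by
  refine (hasDerivAt_const r (Real.sign r)).congr_of_eventuallyEq ?_
  rcases hr.lt_or_gt with hneg | hpos
  · filter_upwards [eventually_lt_nhds hneg] with y hy
    rw [Real.sign_of_neg hy, Real.sign_of_neg hneg]
  · filter_upwards [eventually_gt_nhds hpos] with y hy
    rw [Real.sign_of_pos hy, Real.sign_of_pos hpos]

section FacetRadius

variable {t : ℝ}

theorem facetRadius_eq (ht : 0 ≤ t) : facetRadius t = (3/2 * t) ^ ((1:ℝ)/3) :=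
  (Real.mul_rpow (by norm_num) ht).symm

theorem facetRadius_pos (ht : 0 < t) : 0 < facetRadius t := by
  unfold facetRadius; positivity

theorem continuous_facetRadius : Continuous facetRadius :=
  (Real.continuous_rpow_const (by norm_num)).const_mul _

theorem facetRadius_pow_three (ht : 0 ≤ t) : facetRadius t ^ 3 = 3/2 * t := by
  rw [facetRadius_eq ht]
  simpa using Real.rpow_inv_natCast_pow (x := 3/2 * t) (by positivity) three_ne_zero

theorem hasDerivAt_facetRadius_sq (ht : 0 < t) :
    HasDerivAt (fun s => facetRadius s ^ 2) (1 / facetRadius t) t := by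
  have hlin : HasDerivAt (fun s : ℝ => 3/2 * s) (3/2) t := by
    simpa using (hasDerivAt_id t).const_mul (3/2 : ℝ)
  have hpow := hlin.rpow_const (p := (2:ℝ)/3) (Or.inl (by positivity))
  have hval : 3/2 * ((2:ℝ)/3) * (3/2 * t) ^ ((2:ℝ)/3 - 1) = 1 / facetRadius t := by
    rw [facetRadius_eq ht.le, one_div, ← Real.rpow_neg (by positivity)]
    norm_num
  rw [hval] at hpow
  refine hpow.congr_of_eventuallyEq ?_
  filter_upwards [eventually_gt_nhds ht] with s hs
  rw [facetRadius_eq hs.le, ← Real.rpow_natCast, ← Real.rpow_mul (by positivity)]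
  norm_num

theorem two_mul_facetRadius_sq_lt {R : ℝ} (ht : 0 ≤ t) (ht₁ : t < Real.sqrt 2 / 6 * R^3) :
    2 * facetRadius t ^ 2 < R^2 := by
  have hs2 : Real.sqrt 2 ^ 2 = 2 := Real.sq_sqrt (by norm_num)
  have hcube : (2 * facetRadius t ^ 2) ^ 3 < (R^2) ^ 3 := by
    have hsq : t ^ 2 < (Real.sqrt 2 / 6 * R^3) ^ 2 := pow_lt_pow_left₀ ht₁ ht two_ne_zero
    calc (2 * facetRadius t ^ 2) ^ 3 = 8 * (facetRadius t ^ 3) ^ 2 := by ring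
      _ = 18 * t ^ 2 := by rw [facetRadius_pow_three ht]; ring
      _ < 18 * (Real.sqrt 2 / 6 * R^3) ^ 2 := by linarith
      _ = (R^2) ^ 3 := by rw [mul_pow, div_pow, hs2]; ring
  exact lt_of_pow_lt_pow_left₀ 3 (sq_nonneg R) hcube

theorem facetRadius_lt_sqrt {R : ℝ} (ht : 0 ≤ t) (ht₁ : t < Real.sqrt 2 / 6 * R^3) :
    facetRadius t < Real.sqrt (R^2 - facetRadius t ^ 2) := by
  have hpos : 0 ≤ facetRadius t := by unfold facetRadius; positivity
  rw [Real.lt_sqrt hpos]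
  linarith [two_mul_facetRadius_sq_lt ht ht₁]

end FacetRadius

section PiecewiseDerivatives

variable {R d t x₁ x₂ : ℝ} {ξ L : ℝ → ℝ} {x : ℝ × ℝ}

theorem hasDerivAt_explicitSolution_of_lt (hξ : ContinuousAt ξ t)
    (hd : HasDerivAt (fun s => ξ s ^ 2) d t) (h : |x.2| < ξ t) :
    HasDerivAt (fun s => explicitSolution R ξ L x s) (2 * d) t := by
  refine ((hd.const_mul 2).sub_const (2 * R^2)).congr_of_eventuallyEq ?_
  filter_upwards [hξ.eventually_const_lt h] with s hs
  rw [explicitSolution, if_pos hs.le]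

theorem hasDerivAt_explicitSolution_of_lt_of_lt (hξ : ContinuousAt ξ t) (hL : ContinuousAt L t)
    (hd : HasDerivAt (fun s => ξ s ^ 2) d t) (h₁ : ξ t < |x.2|) (h₂ : |x.2| < L t) :
    HasDerivAt (fun s => explicitSolution R ξ L x s) d t := by
  refine (hd.add_const (x.2^2 - 2 * R^2)).congr_of_eventuallyEq ?_
  filter_upwards [hξ.eventually_lt_const h₁, hL.eventually_const_lt h₂] with s hs₁ hs₂
  rw [explicitSolution, if_neg hs₁.not_ge, if_pos hs₂.le]
  ring

theorem hasDerivAt_explicitSolution_of_gt (hξ : ContinuousAt ξ t) (hL : ContinuousAt L t)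
    (h₁ : ξ t < |x.2|) (h₂ : L t < |x.2|) :
    HasDerivAt (fun s => explicitSolution R ξ L x s) 0 t := by
  refine (hasDerivAt_const t 0).congr_of_eventuallyEq ?_
  filter_upwards [hξ.eventually_lt_const h₁, hL.eventually_lt_const h₂] with s hs₁ hs₂
  rw [explicitSolution, if_neg hs₁.not_ge, if_neg hs₂.not_ge]

theorem hasDerivAt_cahnHoffmanFst_of_le (h : |x₂| ≤ L t) :
    HasDerivAt (fun y => cahnHoffmanFst ξ L (y, x₂) t) (1 / ξ t) x₁ := by
  simp only [cahnHoffmanFst, if_pos h]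
  exact (hasDerivAt_id' x₁).div_const (ξ t)

theorem hasDerivAt_cahnHoffmanFst_of_gt (h : L t < |x₂|) :
    HasDerivAt (fun y => cahnHoffmanFst ξ L (y, x₂) t) 0 x₁ := by
  simp only [cahnHoffmanFst, if_neg h.not_ge]
  exact hasDerivAt_const x₁ 0

theorem hasDerivAt_cahnHoffmanSnd_of_lt (h : |x₂| < ξ t) :
    HasDerivAt (fun y => cahnHoffmanSnd ξ (x₁, y) t) (1 / ξ t) x₂ := by
  refine ((hasDerivAt_id' x₂).div_const (ξ t)).congr_of_eventuallyEq ?_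
  filter_upwards [continuous_abs.continuousAt.eventually_lt_const h] with y hy
  rw [cahnHoffmanSnd, if_pos hy.le]

theorem hasDerivAt_cahnHoffmanSnd_of_gt (hξ : 0 ≤ ξ t) (h : ξ t < |x₂|) :
    HasDerivAt (fun y => cahnHoffmanSnd ξ (x₁, y) t) 0 x₂ := by
  have hx₂ : x₂ ≠ 0 := abs_pos.mp (hξ.trans_lt h)
  refine (Real.hasDerivAt_sign hx₂).congr_of_eventuallyEq ?_
  filter_upwards [continuous_abs.continuousAt.eventually_const_lt h] with y hy
  rw [cahnHoffmanSnd, if_neg hy.not_ge]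

end PiecewiseDerivatives

theorem stmt12_general (R : ℝ)
    (ξ Lf : ℝ → ℝ)
    (hξ : ∀ t : ℝ, ξ t = (3/2 : ℝ) ^ ((1:ℝ)/3) * t ^ ((1:ℝ)/3))
    (hLf : ∀ t : ℝ, Lf t = Real.sqrt (R^2 - (ξ t)^2))
    (t₁ : ℝ) (ht₁ : t₁ = Real.sqrt 2 / 6 * R^3)
    (u : ℝ × ℝ → ℝ → ℝ)
    (hu : ∀ (x : ℝ × ℝ) (t : ℝ), u x t =
      if |x.2| ≤ ξ t then 2 * (ξ t)^2 - 2 * R^2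
      else if |x.2| ≤ Lf t then (ξ t)^2 + x.2^2 - 2 * R^2
      else 0)
    (σ₁ σ₂ : ℝ × ℝ → ℝ → ℝ)
    (hσ₁ : ∀ (x : ℝ × ℝ) (t : ℝ), σ₁ x t = if |x.2| ≤ Lf t then x.1 / ξ t else 0)
    (hσ₂ : ∀ (x : ℝ × ℝ) (t : ℝ), σ₂ x t =
      if |x.2| ≤ ξ t then x.2 / ξ t else Real.sign x.2) :
    ∀ t : ℝ, 0 < t → t < t₁ → ∀ x : ℝ × ℝ,
      |x.1| < ξ t → |x.2| ≠ ξ t → |x.2| ≠ Lf t →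
      ∃ du d₁ d₂ : ℝ,
        HasDerivAt (fun s : ℝ => u x s) du t
        ∧ HasDerivAt (fun y : ℝ => σ₁ (y, x.2) t) d₁ x.1
        ∧ HasDerivAt (fun y : ℝ => σ₂ (x.1, y) t) d₂ x.2
        ∧ du = d₁ + d₂
        ∧ (|x.2| < ξ t → du = 2 / ξ t)
        ∧ (ξ t < |x.2| → |x.2| < Lf t → du = 1 / ξ t)
        ∧ (Lf t < |x.2| → du = 0) := by
  intro t ht htlt x _ hne hneL
  obtain rfl : ξ = facetRadius := funext hξ
  obtain rfl : u = explicitSolution R facetRadius Lf := funext fun x => funext (hu x)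
  obtain rfl : σ₁ = cahnHoffmanFst facetRadius Lf := funext fun x => funext (hσ₁ x)
  obtain rfl : σ₂ = cahnHoffmanSnd facetRadius := funext fun x => funext (hσ₂ x)
  have hξ₀ : 0 < facetRadius t := facetRadius_pos ht
  have hξL : facetRadius t < Lf t := hLf t ▸ facetRadius_lt_sqrt ht.le (ht₁ ▸ htlt)
  have hξc : ContinuousAt facetRadius t := continuous_facetRadius.continuousAt
  have hLc : ContinuousAt Lf t := by
    rw [funext hLf]
    exact (continuous_const.sub (continuous_facetRadius.pow 2)).sqrt.continuousAt
  have hd := hasDerivAt_facetRadius_sq ht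
  rcases hne.lt_or_gt with hin | hout
  · refine ⟨2 * (1 / facetRadius t), 1 / facetRadius t, 1 / facetRadius t,
      hasDerivAt_explicitSolution_of_lt hξc hd hin,
      hasDerivAt_cahnHoffmanFst_of_le (hin.trans hξL).le,
      hasDerivAt_cahnHoffmanSnd_of_lt hin, by ring, fun _ => by ring,
      fun h _ => by linarith, fun h => by linarith⟩
  rcases hneL.lt_or_gt with hmid | hfar
  · exact ⟨1 / facetRadius t, 1 / facetRadius t, 0,
      hasDerivAt_explicitSolution_of_lt_of_lt hξc hLc hd hout hmid,
      hasDerivAt_cahnHoffmanFst_of_le hmid.le,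
      hasDerivAt_cahnHoffmanSnd_of_gt hξ₀.le hout, by ring,
      fun h => by linarith, fun _ _ => rfl, fun h => by linarith⟩
  · exact ⟨0, 0, 0, hasDerivAt_explicitSolution_of_gt hξc hLc hout hfar,
      hasDerivAt_cahnHoffmanFst_of_gt hfar,
      hasDerivAt_cahnHoffmanSnd_of_gt hξ₀.le hout, by ring,
      fun h => by linarith, fun _ h => by linarith, fun _ => rfl⟩

/-- on the strip {|x₁| < ξ(t)}, for 0 < t < t₁ = (√2/6)R³, the
truncated explicit solution u (with levels 2ξ(t)² − 2R², ξ(t)² + x₂² − 2R², 0)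
and Cahn–Hoffman field σ satisfy u_t = ∂σ₁/∂x₁ + ∂σ₂/∂x₂ at every point with
|x₂| ≠ ξ(t) and |x₂| ≠ L(t), L(t) = √(R² − ξ(t)²); both sides equal 2/ξ(t),
1/ξ(t) or 0 according to whether |x₂| < ξ(t), ξ(t) < |x₂| < L(t) or |x₂| > L(t). -/
theorem stmt12 (R : ℝ) (hR : 0 < R)
    (ξ Lf : ℝ → ℝ)
    (hξ : ∀ t : ℝ, ξ t = (3/2 : ℝ) ^ ((1:ℝ)/3) * t ^ ((1:ℝ)/3))
    (hLf : ∀ t : ℝ, Lf t = Real.sqrt (R^2 - (ξ t)^2))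
    (t₁ : ℝ) (ht₁ : t₁ = Real.sqrt 2 / 6 * R^3)
    (u : ℝ × ℝ → ℝ → ℝ)
    (hu : ∀ (x : ℝ × ℝ) (t : ℝ), u x t =
      if |x.2| ≤ ξ t then 2 * (ξ t)^2 - 2 * R^2
      else if |x.2| ≤ Lf t then (ξ t)^2 + x.2^2 - 2 * R^2
      else 0)
    (σ₁ σ₂ : ℝ × ℝ → ℝ → ℝ)
    (hσ₁ : ∀ (x : ℝ × ℝ) (t : ℝ), σ₁ x t = if |x.2| ≤ Lf t then x.1 / ξ t else 0)
    (hσ₂ : ∀ (x : ℝ × ℝ) (t : ℝ), σ₂ x t =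
      if |x.2| ≤ ξ t then x.2 / ξ t else Real.sign x.2) :
    ∀ t : ℝ, 0 < t → t < t₁ → ∀ x : ℝ × ℝ,
      |x.1| < ξ t → |x.2| ≠ ξ t → |x.2| ≠ Lf t →
      ∃ du d₁ d₂ : ℝ,
        HasDerivAt (fun s : ℝ => u x s) du t
        ∧ HasDerivAt (fun y : ℝ => σ₁ (y, x.2) t) d₁ x.1
        ∧ HasDerivAt (fun y : ℝ => σ₂ (x.1, y) t) d₂ x.2
        ∧ du = d₁ + d₂
        ∧ (|x.2| < ξ t → du = 2 / ξ t)
        ∧ (ξ t < |x.2| → |x.2| < Lf t → du = 1 / ξ t)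
        ∧ (Lf t < |x.2| → du = 0) :=
  stmt12_general R ξ Lf hξ hLf t₁ ht₁ u hu σ₁ σ₂ hσ₁ hσ₂
end
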